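/- Under the hypotheses of the tight-set structure lemma, for every u ∈ S_in and every v ∈ S there is a directed path from u to v using only vertices of S; symmetrically, for every u ∈ S and v ∈ S_out there is a directed path from u to v inside S. -/
import Mathlib


open Finset

variable {V : Type*}

/-- Edges of `E` entering the vertex set `S`. -/
def dIn [DecidableEq V] (E : Finset (V × V)) (S : Finset V) : Finset (V × V) :=
  E.filter (fun e => e.1 ∉ S ∧ e.2 ∈ S)

/-- Edges of `E` leaving the vertex set `S`. -/
def dOut [DecidableEq V] (E : Finset (V × V)) (S : Finset V) : Finset (V × V) :=
  E.filter (fun e => e.1 ∈ S ∧ e.2 ∉ S)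

lemma flow_balance [DecidableEq V] (E : Finset (V × V)) (x : V × V → ℝ)
    (hcirc : ∀ v : V, ∑ e ∈ E.filter (fun e => e.1 = v), x e
        = ∑ e ∈ E.filter (fun e => e.2 = v), x e)
    (R : Finset V) : ∑ e ∈ dIn E R, x e = ∑ e ∈ dOut E R, x e := by
  have h1 : ∑ e ∈ E.filter (fun e => e.1 ∈ R), x e
      = ∑ e ∈ E.filter (fun e => e.2 ∈ R), x e := by
    have l1 : ∑ e ∈ E.filter (fun e => e.1 ∈ R), x e
        = ∑ v ∈ R, ∑ e ∈ E.filter (fun e => e.1 = v), x e := by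
      simp only [Finset.sum_filter]
      rw [Finset.sum_comm]
      exact Finset.sum_congr rfl fun e _ => (Finset.sum_ite_eq R e.1 (fun _ => x e)).symm
    have l2 : ∑ e ∈ E.filter (fun e => e.2 ∈ R), x e
        = ∑ v ∈ R, ∑ e ∈ E.filter (fun e => e.2 = v), x e := by
      simp only [Finset.sum_filter]
      rw [Finset.sum_comm]
      exact Finset.sum_congr rfl fun e _ => (Finset.sum_ite_eq R e.2 (fun _ => x e)).symm
    rw [l1, l2]
    exact Finset.sum_congr rfl fun v _ => hcirc v
  have split1 : ∑ e ∈ E.filter (fun e => e.1 ∈ R), x e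
      = (∑ e ∈ E.filter (fun e => e.1 ∈ R ∧ e.2 ∈ R), x e) + ∑ e ∈ dOut E R, x e := by
    rw [dOut, ← Finset.sum_filter_add_sum_filter_not (E.filter (fun e => e.1 ∈ R)) (fun e => e.2 ∈ R)]
    simp only [Finset.filter_filter]
  have split2 : ∑ e ∈ E.filter (fun e => e.2 ∈ R), x e
      = (∑ e ∈ E.filter (fun e => e.1 ∈ R ∧ e.2 ∈ R), x e) + ∑ e ∈ dIn E R, x e := by
    rw [dIn, ← Finset.sum_filter_add_sum_filter_not (E.filter (fun e => e.2 ∈ R)) (fun e => e.1 ∈ R)]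
    simp only [Finset.filter_filter]
    congr 1
    · exact Finset.sum_congr (Finset.filter_congr (by intro e _; tauto)) fun _ _ => rfl
    · exact Finset.sum_congr (Finset.filter_congr (by intro e _; tauto)) fun _ _ => rfl
  rw [split1, split2] at h1
  linarith

/-- Under the hypotheses of the tight-set structure lemma, for every `u ∈ S_in` and every
`v ∈ S` there is a directed path from `u` to `v` inside `S`; symmetrically, for every
`u ∈ S` and `v ∈ S_out` there is a directed path from `u` to `v` inside `S`. -/
theorem exists_path_inside_tight_set [DecidableEq V] [Fintype V] (E : Finset (V × V))
    (x : V × V → ℝ)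
    (hpos : ∀ e ∈ E, 0 < x e)
    (hcirc : ∀ v : V, ∑ e ∈ E.filter (fun e => e.1 = v), x e
        = ∑ e ∈ E.filter (fun e => e.2 = v), x e)
    (hsubtour : ∀ R : Finset V, R.Nonempty → R ≠ Finset.univ →
      2 ≤ (∑ e ∈ dIn E R, x e) + (∑ e ∈ dOut E R, x e))
    (S : Finset V) (hSne : S.Nonempty) (hSproper : S ≠ Finset.univ)
    (htight : (∑ e ∈ dIn E S, x e) + (∑ e ∈ dOut E S, x e) = 2) :
    (∀ u v : V, u ∈ S → (∃ a, a ∉ S ∧ (a, u) ∈ E) → v ∈ S →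
      Relation.ReflTransGen (fun a b => (a, b) ∈ E ∧ a ∈ S ∧ b ∈ S) u v) ∧
    (∀ u v : V, u ∈ S → v ∈ S → (∃ b, b ∉ S ∧ (v, b) ∈ E) →
      Relation.ReflTransGen (fun a b => (a, b) ∈ E ∧ a ∈ S ∧ b ∈ S) u v) := by
  classical
  set r := fun a b => (a, b) ∈ E ∧ a ∈ S ∧ b ∈ S with hr
  have hbal := flow_balance E x hcirc
  have hSin : ∑ e ∈ dIn E S, x e = 1 := by have := hbal S; linarith
  have hSout : ∑ e ∈ dOut E S, x e = 1 := by have := hbal S; linarith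
  obtain ⟨w, hw⟩ : ∃ w, w ∉ S := by
    by_contra h
    push_neg at h
    exact hSproper (Finset.eq_univ_iff_forall.2 h)
  constructor
  · rintro u v hu ⟨a, haS, haE⟩ hv
    by_contra hnv
    set R : Finset V := S.filter (fun w => Relation.ReflTransGen r u w) with hR
    set Q : Finset V := S \ R with hQ
    have huR : u ∈ R := Finset.mem_filter.2 ⟨hu, Relation.ReflTransGen.refl⟩
    have hvQ : v ∈ Q := Finset.mem_sdiff.2 ⟨hv, fun h => hnv (Finset.mem_filter.1 h).2⟩
    have hQne : Q.Nonempty := ⟨v, hvQ⟩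
    have hQuniv : Q ≠ Finset.univ := by
      intro h
      exact hw (Finset.mem_sdiff.1 (h ▸ Finset.mem_univ w)).1
    -- all edges into Q come from outside S
    have hQin : dIn E Q ⊆ dIn E S := by
      intro e he
      obtain ⟨heE, he1, he2⟩ := Finset.mem_filter.1 he
      obtain ⟨he2S, he2R⟩ := Finset.mem_sdiff.1 he2
      refine Finset.mem_filter.2 ⟨heE, fun h1S => ?_, he2S⟩
      have h1R : e.1 ∈ R := by
        by_contra h
        exact he1 (Finset.mem_sdiff.2 ⟨h1S, h⟩)
      exact he2R (Finset.mem_filter.2 ⟨he2S,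
        (Finset.mem_filter.1 h1R).2.tail ⟨heE, h1S, he2S⟩⟩)
    have hau : ((a, u) : V × V) ∈ dIn E S := Finset.mem_filter.2 ⟨haE, haS, hu⟩
    have hauQ : ((a, u) : V × V) ∉ dIn E Q := by
      intro h
      exact (Finset.mem_sdiff.1 (Finset.mem_filter.1 h).2.2).2 huR
    have hQflow : 1 ≤ ∑ e ∈ dIn E Q, x e := by
      have h2 := hsubtour Q hQne hQuniv
      have := hbal Q
      linarith
    have hsub : insert ((a, u) : V × V) (dIn E Q) ⊆ dIn E S := by
      intro e he
      rcases Finset.mem_insert.1 he with h | h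
      · exact h ▸ hau
      · exact hQin h
    have hle : ∑ e ∈ insert ((a, u) : V × V) (dIn E Q), x e ≤ ∑ e ∈ dIn E S, x e := by
      refine Finset.sum_le_sum_of_subset_of_nonneg hsub fun e heS _ => ?_
      exact le_of_lt (hpos e (Finset.mem_filter.1 heS).1)
    rw [Finset.sum_insert hauQ] at hle
    have hxau : 0 < x (a, u) := hpos _ haE
    linarith [hle, hQflow, hSin ▸ hle]
  · rintro u v hu hv ⟨b, hbS, hbE⟩
    by_contra hnv
    set R : Finset V := S.filter (fun w => Relation.ReflTransGen r w v) with hR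
    set Q : Finset V := S \ R with hQ
    have hvR : v ∈ R := Finset.mem_filter.2 ⟨hv, Relation.ReflTransGen.refl⟩
    have huQ : u ∈ Q := Finset.mem_sdiff.2 ⟨hu, fun h => hnv (Finset.mem_filter.1 h).2⟩
    have hQne : Q.Nonempty := ⟨u, huQ⟩
    have hQuniv : Q ≠ Finset.univ := by
      intro h
      exact hw (Finset.mem_sdiff.1 (h ▸ Finset.mem_univ w)).1
    have hQout : dOut E Q ⊆ dOut E S := by
      intro e he
      obtain ⟨heE, he1, he2⟩ := Finset.mem_filter.1 he
      obtain ⟨he1S, he1R⟩ := Finset.mem_sdiff.1 he1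
      refine Finset.mem_filter.2 ⟨heE, he1S, fun h2S => ?_⟩
      have h2R : e.2 ∈ R := by
        by_contra h
        exact he2 (Finset.mem_sdiff.2 ⟨h2S, h⟩)
      exact he1R (Finset.mem_filter.2 ⟨he1S,
        Relation.ReflTransGen.head ⟨heE, he1S, h2S⟩ (Finset.mem_filter.1 h2R).2⟩)
    have hvb : ((v, b) : V × V) ∈ dOut E S := Finset.mem_filter.2 ⟨hbE, hv, hbS⟩
    have hvbQ : ((v, b) : V × V) ∉ dOut E Q := by
      intro h
      exact (Finset.mem_sdiff.1 (Finset.mem_filter.1 h).2.1).2 hvR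
    have hQflow : 1 ≤ ∑ e ∈ dOut E Q, x e := by
      have h2 := hsubtour Q hQne hQuniv
      have := hbal Q
      linarith
    have hsub : insert ((v, b) : V × V) (dOut E Q) ⊆ dOut E S := by
      intro e he
      rcases Finset.mem_insert.1 he with h | h
      · exact h ▸ hvb
      · exact hQout h
    have hle : ∑ e ∈ insert ((v, b) : V × V) (dOut E Q), x e ≤ ∑ e ∈ dOut E S, x e := by
      refine Finset.sum_le_sum_of_subset_of_nonneg hsub fun e heS _ => ?_
      exact le_of_lt (hpos e (Finset.mem_filter.1 heS).1)
    rw [Finset.sum_insert hvbQ] at hle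
    have hxvb : 0 < x (v, b) := hpos _ hbE
    linarith
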